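/- arXiv:1612.02227 — 6 statements merged into one kernel-verified Lean document; each statement's English description precedes it below -/
import Mathlib

section
/- With notation as in the reduction setup (𝔤₁ = 𝔥₁ ⊕ 𝔪₁ a reductive decomposition with Ad(H₁)-invariant inner product (·,·)₁ on 𝔪₁, 𝔤 ⊆ 𝔤₁ a subalgebra with 𝔤₁ = 𝔥₁ ⊕ 𝔪 for 𝔪 ⊆ 𝔤, and the induced inner product (X,Y) := (π⁻¹X, π⁻¹Y)₁ on 𝔪), for every U ∈ 𝔥₁, the operator L(U,·) : 𝔪 → 𝔪 defined by L(U,X) = [U,X]_𝔪 (𝔪-component with respect to 𝔤₁ = 𝔥₁ ⊕ 𝔪) is skew-symmetric with respect to (·,·). -/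
/-! The transported inner product on `𝔪` is `(X, Y) = (p₁ X, p₁ Y)₁`, where `p₁` is the projection
onto `𝔪₁` along `𝔥₁`. Since `[U, X] - [U, X]_𝔪 ∈ 𝔥₁`, we get `p₁ [U, X]_𝔪 = p₁ [U, X]`, and `p₁`
commutes with `ad U` for `U ∈ 𝔥₁` because `ad U` preserves both `𝔥₁` and `𝔪₁`. Hence
`(L(U, X), Y) = ([U, p₁ X], p₁ Y)₁`, and skew-symmetry is inherited from `ad(U)|_{𝔪₁}`. -/

namespace Submodule

variable {R E : Type*} [Ring R] [AddCommGroup E] [Module R E] {p q r : Submodule R E}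

theorem eq_projection_of_isCompl (h : IsCompl p q) {f : E →ₗ[R] E} (hp : ∀ x ∈ p, f x = x)
    (hq : ∀ x ∈ q, f x = 0) : f = p.projection q h :=
  LinearMap.ext_on_codisjoint h.codisjoint
    (fun x hx => by rw [hp x hx, projection_apply_of_mem_left h hx])
    (fun x hx => by rw [hq x hx, (projection_apply_eq_zero_iff h).mpr hx])

theorem projection_projection_of_isCompl (hp : IsCompl p q) (hr : IsCompl r q) (x : E) :
    p.projection q hp (r.projection q hr x) = p.projection q hp x := by
  have hker : p.projection q hp (x - r.projection q hr x) = 0 :=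
    (projection_apply_eq_zero_iff hp).mpr (sub_projection_mem hr x)
  rwa [map_sub, sub_eq_zero, eq_comm] at hker

end Submodule

namespace LieSubalgebra

variable {R L : Type*} [CommRing R] [LieRing L] [LieAlgebra R L]

theorem projection_lie_of_isCompl (H : LieSubalgebra R L) {M : Submodule R L}
    (h : IsCompl M H.toSubmodule) (hM : ∀ U ∈ H, ∀ X ∈ M, ⁅U, X⁆ ∈ M) {U : L} (hU : U ∈ H)
    (Z : L) : M.projection H.toSubmodule h ⁅U, Z⁆ = ⁅U, M.projection H.toSubmodule h Z⁆ := by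
  set P := M.projection H.toSubmodule h
  have hsplit : ⁅U, Z⁆ = ⁅U, Z - P Z⁆ + ⁅U, P Z⁆ := by rw [← lie_add, sub_add_cancel]
  have hH : ⁅U, Z - P Z⁆ ∈ H := H.lie_mem hU (Submodule.sub_projection_mem h Z)
  have hM' : ⁅U, P Z⁆ ∈ M := hM U hU _ (Submodule.projection_apply_mem h Z)
  rw [hsplit, map_add, (Submodule.projection_apply_eq_zero_iff h).mpr hH,
    Submodule.projection_apply_of_mem_left h hM', zero_add]

end LieSubalgebra

theorem stmt2_general {g1 : Type*} [LieRing g1] [LieAlgebra ℝ g1]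
    (h1 : LieSubalgebra ℝ g1)
    (m1 : Submodule ℝ g1) (hcompl1 : IsCompl h1.toSubmodule m1)
    (hred : ∀ U ∈ h1, ∀ X ∈ m1, ⁅U, X⁆ ∈ m1)
    (ip1 : LinearMap.BilinForm ℝ g1)
    -- ip₁ is Ad(H₁)-invariant: ad(U)|𝔪₁ is skew-symmetric for all U ∈ 𝔥₁ :
    (hskew1 : ∀ U ∈ h1, ∀ X ∈ m1, ∀ Y ∈ m1, ip1 ⁅U, X⁆ Y = - ip1 X ⁅U, Y⁆)
    (m : Submodule ℝ g1)
    (hcompl : IsCompl h1.toSubmodule m)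
    -- pm : projection of 𝔤₁ onto 𝔪 along 𝔥₁
    (pm : g1 →ₗ[ℝ] g1) (hpm_m : ∀ x ∈ m, pm x = x) (hpm_h : ∀ x ∈ h1, pm x = 0)
    -- p1 : projection of 𝔤₁ onto 𝔪₁ along 𝔥₁ (its restriction to 𝔪 is π⁻¹)
    (p1 : g1 →ₗ[ℝ] g1) (hp1_m : ∀ x ∈ m1, p1 x = x) (hp1_h : ∀ x ∈ h1, p1 x = 0) :
    ∀ U ∈ h1, ∀ X ∈ m, ∀ Y ∈ m,
      ip1 (p1 (pm ⁅U, X⁆)) (p1 Y) = - ip1 (p1 X) (p1 (pm ⁅U, Y⁆)) := by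
  intro U hU X _ Y _
  obtain rfl := Submodule.eq_projection_of_isCompl hcompl.symm hpm_m hpm_h
  obtain rfl := Submodule.eq_projection_of_isCompl hcompl1.symm hp1_m hp1_h
  simp only [Submodule.projection_projection_of_isCompl,
    h1.projection_lie_of_isCompl hcompl1.symm hred hU]
  exact hskew1 U hU _ (Submodule.projection_apply_mem _ X) _ (Submodule.projection_apply_mem _ Y)

/-- In the reduction setup, for every U ∈ 𝔥₁ the operator
L(U,·) : 𝔪 → 𝔪, L(U,X) = [U,X]_𝔪 (𝔪-component w.r.t. 𝔤₁ = 𝔥₁ ⊕ 𝔪) is skew-symmetric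
with respect to the inner product transported from (𝔪₁, ip₁) via the bijection
π : 𝔪₁ → 𝔪 (whose inverse on 𝔪 is the projection p1 onto 𝔪₁ along 𝔥₁), i.e.
(L(U,X), Y) + (X, L(U,Y)) = 0 where (X,Y) := ip₁ (p1 X) (p1 Y) for X, Y ∈ 𝔪. -/
theorem stmt2 {g1 : Type*} [LieRing g1] [LieAlgebra ℝ g1]
    (h1 g : LieSubalgebra ℝ g1)
    (m1 : Submodule ℝ g1) (hcompl1 : IsCompl h1.toSubmodule m1)
    (hred : ∀ U ∈ h1, ∀ X ∈ m1, ⁅U, X⁆ ∈ m1)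
    -- ip₁ is an inner product on 𝔪₁ :
    (ip1 : LinearMap.BilinForm ℝ g1)
    (hsymm : ∀ X ∈ m1, ∀ Y ∈ m1, ip1 X Y = ip1 Y X)
    (hpos : ∀ X ∈ m1, X ≠ 0 → 0 < ip1 X X)
    -- ip₁ is Ad(H₁)-invariant: ad(U)|𝔪₁ is skew-symmetric for all U ∈ 𝔥₁ :
    (hskew1 : ∀ U ∈ h1, ∀ X ∈ m1, ∀ Y ∈ m1, ip1 ⁅U, X⁆ Y = - ip1 X ⁅U, Y⁆)
    (hsum : h1.toSubmodule ⊔ g.toSubmodule = ⊤)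
    (m : Submodule ℝ g1) (hmg : m ≤ g.toSubmodule)
    (hcompl : IsCompl h1.toSubmodule m)
    -- pm : projection of 𝔤₁ onto 𝔪 along 𝔥₁
    (pm : g1 →ₗ[ℝ] g1) (hpm_m : ∀ x ∈ m, pm x = x) (hpm_h : ∀ x ∈ h1, pm x = 0)
    (hpm_ran : ∀ x, pm x ∈ m)
    -- p1 : projection of 𝔤₁ onto 𝔪₁ along 𝔥₁ (its restriction to 𝔪 is π⁻¹)
    (p1 : g1 →ₗ[ℝ] g1) (hp1_m : ∀ x ∈ m1, p1 x = x) (hp1_h : ∀ x ∈ h1, p1 x = 0)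
    (hp1_ran : ∀ x, p1 x ∈ m1) :
    ∀ U ∈ h1, ∀ X ∈ m, ∀ Y ∈ m,
      ip1 (p1 (pm ⁅U, X⁆)) (p1 Y) = - ip1 (p1 X) (p1 (pm ⁅U, Y⁆)) :=
  stmt2_general h1 m1 hcompl1 hred ip1 hskew1 m hcompl pm hpm_m hpm_h p1 hp1_m hp1_h
end

section
/- (Theorem on reduction of the GO condition) Let 𝔤₁ = 𝔥₁ ⊕ 𝔪₁ be a reductive decomposition with Ad(𝔥₁)-invariant inner product (·,·)₁ on 𝔪₁, and let 𝔤 ⊆ 𝔤₁ be a subalgebra with 𝔥₁ + 𝔤 = 𝔤₁, 𝔥 = 𝔥₁ ∩ 𝔤, 𝔪 a complement of 𝔥 in 𝔤 with the transported inner product (·,·). Write 𝔥₁ = 𝔥 ⊕ 𝔥̃ with [𝔥, 𝔥̃] ⊆ 𝔥̃. Then the following are equivalent: (a) for every X₁ ∈ 𝔪₁ there exists Z₁ ∈ 𝔥₁ with ([X₁+Z₁, Y₁]_{𝔪₁}, X₁)₁ = 0 for all Y₁ ∈ 𝔪₁; (b) for every X ∈ 𝔪 there exist V ∈ 𝔥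 and U ∈ 𝔥̃ such that ([X+V, Y]_𝔪, X) + ([U, Y]_𝔪, X) = 0 for all Y ∈ 𝔪, where [·,·]_𝔪 denotes the 𝔪-component with respect to 𝔤₁ = 𝔥₁ ⊕ 𝔪. -/
/-- Theorem 2.1, reduction of the GO condition: with 𝔤₁ = 𝔥₁ ⊕ 𝔪₁
a reductive decomposition with Ad(𝔥₁)-invariant inner product ip₁ on 𝔪₁,
𝔤 ⊆ 𝔤₁ a subalgebra with 𝔥₁ + 𝔤 = 𝔤₁, 𝔥 = 𝔥₁ ∩ 𝔤, 𝔪 a complement of 𝔥 in 𝔤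
(carrying the transported inner product (X,Y) = ip₁ (p1 X) (p1 Y)), and
𝔥₁ = 𝔥 ⊕ 𝔥̃ with [𝔥,𝔥̃] ⊆ 𝔥̃, the GO-property for (𝔤₁,𝔥₁,𝔪₁) is equivalent to:
for every X ∈ 𝔪 there are V ∈ 𝔥 and U ∈ 𝔥̃ with
([X+V,Y]_𝔪, X) + ([U,Y]_𝔪, X) = 0 for all Y ∈ 𝔪. -/
theorem stmt3 {g1 : Type*} [LieRing g1] [LieAlgebra ℝ g1]
    (h1 g : LieSubalgebra ℝ g1)
    (m1 : Submodule ℝ g1) (hcompl1 : IsCompl h1.toSubmodule m1)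
    (hred : ∀ U ∈ h1, ∀ X ∈ m1, ⁅U, X⁆ ∈ m1)
    -- ip₁ is an inner product on 𝔪₁ :
    (ip1 : LinearMap.BilinForm ℝ g1)
    (hsymm : ∀ X ∈ m1, ∀ Y ∈ m1, ip1 X Y = ip1 Y X)
    (hpos : ∀ X ∈ m1, X ≠ 0 → 0 < ip1 X X)
    -- ip₁ is Ad(H₁)-invariant: ad(U)|𝔪₁ is skew-symmetric for all U ∈ 𝔥₁ :
    (hskew1 : ∀ U ∈ h1, ∀ X ∈ m1, ∀ Y ∈ m1, ip1 ⁅U, X⁆ Y = - ip1 X ⁅U, Y⁆)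
    (hsum : h1.toSubmodule ⊔ g.toSubmodule = ⊤)
    -- 𝔪 : an ad(𝔥)-invariant complement of 𝔥 = 𝔥₁ ∩ 𝔤 in 𝔤 :
    (m : Submodule ℝ g1) (hmg : m ≤ g.toSubmodule)
    (hm_inf : m ⊓ (h1.toSubmodule ⊓ g.toSubmodule) = ⊥)
    (hm_sup : m ⊔ (h1.toSubmodule ⊓ g.toSubmodule) = g.toSubmodule)
    (hm_inv : ∀ V, V ∈ h1.toSubmodule ⊓ g.toSubmodule → ∀ X ∈ m, ⁅V, X⁆ ∈ m)
    (hcompl : IsCompl h1.toSubmodule m)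
    -- 𝔥̃ : an ad(𝔥)-invariant complement of 𝔥 in 𝔥₁ :
    (ht : Submodule ℝ g1) (hth1 : ht ≤ h1.toSubmodule)
    (hht_inf : ht ⊓ (h1.toSubmodule ⊓ g.toSubmodule) = ⊥)
    (hht_sup : ht ⊔ (h1.toSubmodule ⊓ g.toSubmodule) = h1.toSubmodule)
    (hht_inv : ∀ V, V ∈ h1.toSubmodule ⊓ g.toSubmodule → ∀ X ∈ ht, ⁅V, X⁆ ∈ ht)
    -- pm : projection of 𝔤₁ onto 𝔪 along 𝔥₁
    (pm : g1 →ₗ[ℝ] g1) (hpm_m : ∀ x ∈ m, pm x = x) (hpm_h : ∀ x ∈ h1, pm x = 0)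
    (hpm_ran : ∀ x, pm x ∈ m)
    -- p1 : projection of 𝔤₁ onto 𝔪₁ along 𝔥₁ (its restriction to 𝔪 is π⁻¹)
    (p1 : g1 →ₗ[ℝ] g1) (hp1_m : ∀ x ∈ m1, p1 x = x) (hp1_h : ∀ x ∈ h1, p1 x = 0)
    (hp1_ran : ∀ x, p1 x ∈ m1) :
    (∀ X1 ∈ m1, ∃ Z1 ∈ h1, ∀ Y1 ∈ m1, ip1 (p1 ⁅X1 + Z1, Y1⁆) X1 = 0) ↔
      (∀ X ∈ m, ∃ V ∈ h1.toSubmodule ⊓ g.toSubmodule, ∃ U ∈ ht, ∀ Y ∈ m,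
        ip1 (p1 (pm ⁅X + V, Y⁆)) (p1 X) + ip1 (p1 (pm ⁅U, Y⁆)) (p1 X) = 0) := by

  classical
  -- x - p1 x ∈ h1
  have hx1 : ∀ x : g1, x - p1 x ∈ h1 := by
    intro x
    have hx : x ∈ h1.toSubmodule ⊔ m1 := by rw [hcompl1.sup_eq_top]; trivial
    obtain ⟨a, ha, b, hb, hab⟩ := Submodule.mem_sup.mp hx
    have hb1 : p1 x = b := by rw [← hab, map_add, hp1_h a ha, hp1_m b hb, zero_add]
    have : x - p1 x = a := by rw [hb1, ← hab]; abel
    rw [this]; exact ha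
  -- x - pm x ∈ h1
  have hxm : ∀ x : g1, x - pm x ∈ h1 := by
    intro x
    have hx : x ∈ h1.toSubmodule ⊔ m := by rw [hcompl.sup_eq_top]; trivial
    obtain ⟨a, ha, b, hb, hab⟩ := Submodule.mem_sup.mp hx
    have hb1 : pm x = b := by rw [← hab, map_add, hpm_h a ha, hpm_m b hb, zero_add]
    have : x - pm x = a := by rw [hb1, ← hab]; abel
    rw [this]; exact ha
  -- p1 ∘ pm = p1
  have p1pm : ∀ x : g1, p1 (pm x) = p1 x := by
    intro x
    have h0 := hp1_h _ (hxm x)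
    rw [map_sub, sub_eq_zero] at h0
    exact h0.symm
  -- key skew-symmetry consequence
  have key : ∀ U ∈ h1, ∀ X1 ∈ m1, ip1 ⁅U, X1⁆ X1 = 0 := by
    intro U hU X1 hX1
    have h1' := hskew1 U hU X1 hX1 X1 hX1
    have h2 := hsymm X1 hX1 ⁅U, X1⁆ (hred U hU X1 hX1)
    linarith
  -- the bracket with an h1-element is invisible to the GO condition
  have lemC : ∀ X1 ∈ m1, ∀ Z1 ∈ h1, ∀ U ∈ h1, ip1 (p1 ⁅X1 + Z1, U⁆) X1 = 0 := by
    intro X1 hX1 Z1 hZ1 U hU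
    have hm1' : ⁅X1, U⁆ ∈ m1 := by
      rw [← lie_skew]; exact m1.neg_mem (hred U hU X1 hX1)
    have e1 : p1 ⁅X1 + Z1, U⁆ = ⁅X1, U⁆ := by
      rw [add_lie, map_add, hp1_m _ hm1', hp1_h _ (h1.lie_mem hZ1 hU), add_zero]
    rw [e1, ← lie_skew, map_neg, LinearMap.neg_apply, neg_eq_zero]
    exact key U hU X1 hX1
  -- replacing Y by Y' with Y - Y' ∈ h1 does not change the value
  have lemD : ∀ X1 ∈ m1, ∀ Z1 ∈ h1, ∀ Y Y' : g1, Y - Y' ∈ h1 →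
      ip1 (p1 ⁅X1 + Z1, Y⁆) X1 = ip1 (p1 ⁅X1 + Z1, Y'⁆) X1 := by
    intro X1 hX1 Z1 hZ1 Y Y' hYY
    have h0 := lemC X1 hX1 Z1 hZ1 (Y - Y') hYY
    have hYe : ⁅X1 + Z1, Y⁆ = ⁅X1 + Z1, Y'⁆ + ⁅X1 + Z1, Y - Y'⁆ := by
      rw [← lie_add]; congr 1; abel
    rw [hYe, map_add, map_add, LinearMap.add_apply, h0, add_zero]
  constructor
  · intro ha X hX
    have hX1 : p1 X ∈ m1 := hp1_ran X
    obtain ⟨Z1, hZ1, hZ⟩ := ha (p1 X) hX1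
    have hXX1 : X - p1 X ∈ h1 := hx1 X
    have hZmem : Z1 - (X - p1 X) ∈ ht ⊔ (h1.toSubmodule ⊓ g.toSubmodule) := by
      rw [hht_sup]
      exact sub_mem hZ1 hXX1
    obtain ⟨U, hU, V, hV, hUV⟩ := Submodule.mem_sup.mp hZmem
    refine ⟨V, hV, U, hU, ?_⟩
    intro Y hY
    have hsumW : X + V + U = p1 X + Z1 := by
      have : X + (U + V) = p1 X + Z1 := by rw [hUV]; abel
      rw [← this]; abel
    have e1 : ip1 (p1 (pm ⁅X + V, Y⁆)) (p1 X) + ip1 (p1 (pm ⁅U, Y⁆)) (p1 X)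
        = ip1 (p1 ⁅X + V + U, Y⁆) (p1 X) := by
      rw [p1pm, p1pm, add_lie (X + V) U Y, map_add, map_add, LinearMap.add_apply]
    rw [e1, hsumW, lemD (p1 X) hX1 Z1 hZ1 Y (p1 Y) (hx1 Y)]
    exact hZ (p1 Y) (hp1_ran Y)
  · intro hb X1 hX1
    have hXm : pm X1 ∈ m := hpm_ran X1
    have hp1X : p1 (pm X1) = X1 := by rw [p1pm, hp1_m X1 hX1]
    obtain ⟨V, hV, U, hU, hcond⟩ := hb (pm X1) hXm
    have hVh : V ∈ h1 := hV.1
    have hUh : U ∈ h1 := hth1 hU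
    have hXX1 : pm X1 - X1 ∈ h1 := by
      have := hx1 (pm X1)
      rwa [hp1X] at this
    refine ⟨(pm X1 - X1) + V + U, add_mem (add_mem hXX1 hVh) hUh, ?_⟩
    intro Y1 hY1
    have hsumW : X1 + ((pm X1 - X1) + V + U) = (pm X1 + V) + U := by abel
    rw [lemD X1 hX1 _ (add_mem (add_mem hXX1 hVh) hUh) Y1 (pm Y1) (hxm Y1), hsumW,
      add_lie, map_add, map_add, LinearMap.add_apply]
    have h5 := hcond (pm Y1) (hpm_ran Y1)
    simp only [p1pm, hp1_m X1 hX1] at h5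
    exact h5
end

section
/- Let 𝔤 be a compact Lie algebra with bi-invariant inner product ⟨·,·⟩ (i.e. ⟨[X,Y],Z⟩ = −⟨Y,[X,Z]⟩), 𝔥 a subalgebra, 𝔪 its orthogonal complement, and A : 𝔪 → 𝔪 the metric endomorphism of an ad(𝔥)-invariant inner product (·,·) = ⟨A·,·⟩ on 𝔪. Then for X ∈ 𝔪, V ∈ 𝔥, W ∈ 𝔪, the following are equivalent: (a) ([X+V+W, Y]_𝔪, X) = 0 for all Y ∈ 𝔪; (b) [A(X), X+V+W] ∈ 𝔥. -/
/-! With `Z = X + V + W`, bi-invariance and the symmetry of `A` give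
`([Z, Y]_𝔪, X) = ⟨[Z, Y], A X⟩ = ⟨Y, [A X, Z]⟩` because `A X ∈ 𝔪` is orthogonal to the
`𝔥`-component of `[Z, Y]`. So (a) says that `[A X, Z]` is orthogonal to `𝔪`, and since
`⟨·,·⟩` is definite, `𝔪^⊥ = 𝔥`. -/

namespace LinearMap.BilinForm

section Projection

variable {g : Type*} [AddCommGroup g] [Module ℝ g] (ip : LinearMap.BilinForm ℝ g)
  {h m : Submodule ℝ g} {pm : g →ₗ[ℝ] g}

theorem apply_proj_right_eq (hm : ∀ x, x ∈ m ↔ ∀ z ∈ h, ip x z = 0)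
    (hpm_h : ∀ x, x - pm x ∈ h) {a : g} (ha : a ∈ m) (x : g) : ip a (pm x) = ip a x := by
  have horth : ip a (x - pm x) = 0 := (hm a).1 ha _ (hpm_h x)
  rw [map_sub, sub_eq_zero] at horth
  exact horth.symm

theorem mem_iff_forall_apply_eq_zero (hpos : ∀ X, X ≠ 0 → 0 < ip X X)
    (hm : ∀ x, x ∈ m ↔ ∀ z ∈ h, ip x z = 0)
    (hpm_ran : ∀ x, pm x ∈ m) (hpm_h : ∀ x, x - pm x ∈ h) (u : g) :
    u ∈ h ↔ ∀ Y ∈ m, ip Y u = 0 := by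
  refine ⟨fun hu Y hY => (hm Y).1 hY u hu, fun hu => ?_⟩
  have hpmu : pm u = 0 := by
    by_contra hne
    have hself : ip (pm u) (pm u) = 0 := by
      rw [ip.apply_proj_right_eq hm hpm_h (hpm_ran u)]
      exact hu _ (hpm_ran u)
    exact (hpos _ hne).ne' hself
  simpa [hpmu] using hpm_h u

end Projection

theorem apply_lie_eq_apply_lie {g : Type*} [LieRing g] [LieAlgebra ℝ g]
    (ip : LinearMap.BilinForm ℝ g) (hsymm : ∀ X Y, ip X Y = ip Y X)
    (hbiinv : ∀ X Y Z : g, ip ⁅X, Y⁆ Z = - ip Y ⁅X, Z⁆) (B Z Y : g) :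
    ip B ⁅Z, Y⁆ = ip Y ⁅B, Z⁆ := by
  rw [hsymm, hbiinv, ← lie_skew, map_neg, neg_neg]

end LinearMap.BilinForm

theorem stmt6_general {g : Type*} [LieRing g] [LieAlgebra ℝ g]
    -- ip : a bi-invariant inner product on 𝔤 :
    (ip : LinearMap.BilinForm ℝ g)
    (hsymm : ∀ X Y, ip X Y = ip Y X)
    (hpos : ∀ X, X ≠ 0 → 0 < ip X X)
    (hbiinv : ∀ X Y Z : g, ip ⁅X, Y⁆ Z = - ip Y ⁅X, Z⁆)
    (h : LieSubalgebra ℝ g)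
    -- 𝔪 : the ip-orthogonal complement of 𝔥 :
    (m : Submodule ℝ g)
    (hm : ∀ x, x ∈ m ↔ ∀ z ∈ h, ip x z = 0)
    -- pm : the orthogonal projection onto 𝔪 (so [·,·]_𝔪 = pm ⁅·,·⁆) :
    (pm : g →ₗ[ℝ] g) (hpm_ran : ∀ x, pm x ∈ m) (hpm_h : ∀ x, x - pm x ∈ h)
    -- A : the metric endomorphism, symmetric, positive, 𝔪-preserving, ad(𝔥)-equivariant :
    (A : g →ₗ[ℝ] g)
    (hAsymm : ∀ X Y, ip (A X) Y = ip X (A Y))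
    (hAm : ∀ X ∈ m, A X ∈ m)
    (X : g) (hX : X ∈ m) (V : g) (W : g) :
    (∀ Y ∈ m, ip (A (pm ⁅X + V + W, Y⁆)) X = 0) ↔ ⁅A X, X + V + W⁆ ∈ h := by
  have key : ∀ Y, ip (A (pm ⁅X + V + W, Y⁆)) X = ip Y ⁅A X, X + V + W⁆ := fun Y => by
    rw [hAsymm, hsymm, ip.apply_proj_right_eq (h := h.toSubmodule) hm hpm_h (hAm X hX),
      ip.apply_lie_eq_apply_lie hsymm hbiinv]
  simp only [key]
  exact (ip.mem_iff_forall_apply_eq_zero (h := h.toSubmodule) hpos hm hpm_ran hpm_h _).symm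

/-- Proposition 2.5: 𝔤 compact Lie algebra with bi-invariant inner
product ip, 𝔥 a subalgebra, 𝔪 its orthogonal complement, A the metric endomorphism
of an ad(𝔥)-invariant inner product (·,·) = ip (A ·) · on 𝔪. For X ∈ 𝔪, V ∈ 𝔥,
W ∈ 𝔪: ([X+V+W, Y]_𝔪, X) = 0 for all Y ∈ 𝔪 iff [A(X), X+V+W] ∈ 𝔥. -/
theorem stmt6 {g : Type*} [LieRing g] [LieAlgebra ℝ g] [FiniteDimensional ℝ g]
    -- ip : a bi-invariant inner product on 𝔤 :
    (ip : LinearMap.BilinForm ℝ g)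
    (hsymm : ∀ X Y, ip X Y = ip Y X)
    (hpos : ∀ X, X ≠ 0 → 0 < ip X X)
    (hbiinv : ∀ X Y Z : g, ip ⁅X, Y⁆ Z = - ip Y ⁅X, Z⁆)
    (h : LieSubalgebra ℝ g)
    -- 𝔪 : the ip-orthogonal complement of 𝔥 :
    (m : Submodule ℝ g)
    (hm : ∀ x, x ∈ m ↔ ∀ z ∈ h, ip x z = 0)
    -- pm : the orthogonal projection onto 𝔪 (so [·,·]_𝔪 = pm ⁅·,·⁆) :
    (pm : g →ₗ[ℝ] g) (hpm_ran : ∀ x, pm x ∈ m) (hpm_h : ∀ x, x - pm x ∈ h)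
    -- A : the metric endomorphism, symmetric, positive, 𝔪-preserving, ad(𝔥)-equivariant :
    (A : g →ₗ[ℝ] g)
    (hAsymm : ∀ X Y, ip (A X) Y = ip X (A Y))
    (hApos : ∀ X ∈ m, X ≠ 0 → 0 < ip (A X) X)
    (hAm : ∀ X ∈ m, A X ∈ m)
    (hAequiv : ∀ Z ∈ h, ∀ X ∈ m, A ⁅Z, X⁆ = ⁅Z, A X⁆)
    (X : g) (hX : X ∈ m) (V : g) (hV : V ∈ h) (W : g) (hW : W ∈ m) :
    (∀ Y ∈ m, ip (A (pm ⁅X + V + W, Y⁆)) X = 0) ↔ ⁅A X, X + V + W⁆ ∈ h :=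
  stmt6_general ip hsymm hpos hbiinv h m hm pm hpm_ran hpm_h A hAsymm hAm X hX V W
end

section
/- Let A = diag(x₄, x₁, x₁, x₂, x₂, x₃, x₃) act on 𝔪 = span(X₀, X₁,...,X₆) ⊆ su(3) (with X₀,...,X₆ as in the Aloff–Wallach setup for pairwise distinct k, l, m with k+l+m=0), and suppose x₁ = x₂ = x₃ = x. Then for any X = Σᵢ αᵢXᵢ ∈ 𝔪, setting β = (x₄/x − 1)α₀(l−m)f, γ = (x₄/x − 1)α₀(m−k)f with f = √(2/(3L)), and V+W = i·diag(β, γ, −β−γ), one has [A(X), X+V+W] = 0. -/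
open Matrix Complex

/-!
With `x₁ = x₂ = x₃ = x` the metric endomorphism is `A = x • id + (x₄ - x) • (projection on X₀)`,
so `A(X) = x • X + (x₄ - x) α₀ • X₀`. The correction `V + W` is exactly `(x₄/x - 1) α₀ • X₀`,
hence `A(X) = x • (X + V + W)`, and a bracket `⁅x • Y, Y⁆` vanishes.
-/

theorem Ring.lie_smul_left_self {R A : Type*} [CommSemiring R] [Ring A] [Algebra R A]
    (c : R) (a : A) : ⁅c • a, a⁆ = 0 :=
  commute_iff_lie_eq.mp ((Commute.refl a).smul_left c)

theorem weighted_sum_fin_seven_eq {M : Type*} [AddCommGroup M] [Module ℝ M]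
    (v : Fin 7 → M) (α : Fin 7 → ℝ) (x₄ x : ℝ) :
    (x₄ * α 0) • v 0 + (x * α 1) • v 1 + (x * α 2) • v 2 + (x * α 3) • v 3 +
        (x * α 4) • v 4 + (x * α 5) • v 5 + (x * α 6) • v 6 =
      x • ∑ i, α i • v i + ((x₄ - x) * α 0) • v 0 := by
  simp only [Fin.sum_univ_seven]
  module

theorem diagonal_correction_eq_smul {k l m f s β γ : ℝ} (hklm : k + l + m = 0)
    (hβ : β = s * (l - m) * f) (hγ : γ = s * (m - k) * f) :
    !![(β : ℂ) * I, 0, 0; 0, (γ : ℂ) * I, 0; 0, 0, (-(β : ℂ) - γ) * I] =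
      s • ((f : ℂ) • !![(l - m) * I, 0, 0; 0, (m - k) * I, 0; 0, 0, (k - l) * I]) := by
  have hk : (k : ℂ) = -l - m := by exact_mod_cast (by linarith : k = -l - m)
  ext i j
  fin_cases i <;> fin_cases j <;>
    simp [hβ, hγ, hk, ← Complex.coe_smul] <;> ring

theorem stmt11_general (k l m f : ℝ) (hklm : k + l + m = 0)
    (v : Fin 7 → Matrix (Fin 3) (Fin 3) ℂ)
    (hv0 : v 0 = (f : ℂ) • !![(l - m) * I, 0, 0; 0, (m - k) * I, 0; 0, 0, (k - l) * I])
    (x₁ x₂ x₃ x₄ x : ℝ) (hx : 0 < x)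
    (h1 : x₁ = x) (h2 : x₂ = x) (h3 : x₃ = x)
    (α : Fin 7 → ℝ) (β γ : ℝ)
    (hβ : β = (x₄ / x - 1) * α 0 * (l - m) * f)
    (hγ : γ = (x₄ / x - 1) * α 0 * (m - k) * f)
    (X AX D : Matrix (Fin 3) (Fin 3) ℂ)
    (hX : X = ∑ i, α i • v i)
    (hAX : AX = (x₄ * α 0) • v 0 + (x₁ * α 1) • v 1 + (x₁ * α 2) • v 2 +
      (x₂ * α 3) • v 3 + (x₂ * α 4) • v 4 + (x₃ * α 5) • v 5 + (x₃ * α 6) • v 6)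
    (hD : D = !![(β : ℂ) * I, 0, 0; 0, (γ : ℂ) * I, 0; 0, 0, (-(β : ℂ) - γ) * I]) :
    ⁅AX, X + D⁆ = 0 := by
  set s := (x₄ / x - 1) * α 0
  have hD_eq : D = s • v 0 := by
    rw [hD, hv0]
    exact diagonal_correction_eq_smul hklm (by rw [hβ]) (by rw [hγ])
  have hs : (x₄ - x) * α 0 = x * s := by
    simp only [s]
    field_simp
  have hAX_eq : AX = x • (X + D) := by
    rw [hAX, h1, h2, h3, weighted_sum_fin_seven_eq, hs, ← hX, hD_eq, smul_add, smul_smul]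
  rw [hAX_eq]
  exact Ring.lie_smul_left_self (x : ℂ) (X + D)

/-- in the Aloff–Wallach setup on su(3), if x₁ = x₂ = x₃ = x then for
every X = Σ αᵢXᵢ the choice β = (x₄/x − 1)α₀(l−m)f, γ = (x₄/x − 1)α₀(m−k)f
(f = √(2/(3L))) of the diagonal correction V+W = i·diag(β,γ,−β−γ) gives
[A(X), X+V+W] = 0. -/
theorem stmt11 (k l m L f : ℝ) (hklm : k + l + m = 0)
    (hd1 : k ≠ l) (hd2 : k ≠ m) (hd3 : l ≠ m)
    (hL : L = k ^ 2 + l ^ 2 + m ^ 2) (hf : f = Real.sqrt (2 / (3 * L)))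
    (v : Fin 7 → Matrix (Fin 3) (Fin 3) ℂ)
    (hv0 : v 0 = (f : ℂ) • !![(l - m) * I, 0, 0; 0, (m - k) * I, 0; 0, 0, (k - l) * I])
    (hv1 : v 1 = !![0, 1, 0; -1, 0, 0; 0, 0, 0])
    (hv2 : v 2 = !![0, I, 0; I, 0, 0; 0, 0, 0])
    (hv3 : v 3 = !![0, 0, 1; 0, 0, 0; -1, 0, 0])
    (hv4 : v 4 = !![0, 0, I; 0, 0, 0; I, 0, 0])
    (hv5 : v 5 = !![0, 0, 0; 0, 0, 1; 0, -1, 0])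
    (hv6 : v 6 = !![0, 0, 0; 0, 0, I; 0, I, 0])
    (x₁ x₂ x₃ x₄ x : ℝ) (hx : 0 < x) (hx4 : 0 < x₄)
    (h1 : x₁ = x) (h2 : x₂ = x) (h3 : x₃ = x)
    (α : Fin 7 → ℝ) (β γ : ℝ)
    (hβ : β = (x₄ / x - 1) * α 0 * (l - m) * f)
    (hγ : γ = (x₄ / x - 1) * α 0 * (m - k) * f)
    (X AX D : Matrix (Fin 3) (Fin 3) ℂ)
    (hX : X = ∑ i, α i • v i)
    (hAX : AX = (x₄ * α 0) • v 0 + (x₁ * α 1) • v 1 + (x₁ * α 2) • v 2 +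
      (x₂ * α 3) • v 3 + (x₂ * α 4) • v 4 + (x₃ * α 5) • v 5 + (x₃ * α 6) • v 6)
    (hD : D = !![(β : ℂ) * I, 0, 0; 0, (γ : ℂ) * I, 0; 0, 0, (-(β : ℂ) - γ) * I]) :
    ⁅AX, X + D⁆ = 0 :=
  stmt11_general k l m f hklm v hv0 x₁ x₂ x₃ x₄ x hx h1 h2 h3 α β γ hβ hγ X AX D hX hAX hD
end

section
/- (Key step in classification of GO metrics on compact Lie groups) Let 𝔤 be a compact Lie algebra with bi-invariant inner product ⟨·,·⟩, decomposed orthogonally as 𝔤 = 𝔭₁ ⊕ ... ⊕ 𝔭ₛ, with metric endomorphism A acting by uᵢ on 𝔭ᵢ. Suppose 𝔨 ⊆ 𝔤 is a subalgebra such that 𝔨 = ⊕ᵢ 𝔨ᵢ with 𝔨ᵢ = 𝔨 ∩ 𝔭ᵢ, and the orthogonal complement 𝔪ᵢ of 𝔨ᵢ in 𝔭ᵢ is ad(𝔨)-invariant. Suppose that for every X ∈ 𝔤 there exists W ∈ 𝔨 with [A(X), X+W] = 0. If 𝔪₁ ≠ 0 and 𝔪₂ ≠ 0 with u₁ ≠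 u₂, then [𝔪₁, 𝔪₂] ⊆ 𝔪₁ ⊕ 𝔪₂. -/
/-- key step in Proposition 4.3: 𝔤 compact with bi-invariant inner
product ip, orthogonal decomposition 𝔤 = ⊕ᵢ 𝔭ᵢ, metric endomorphism A = uᵢ·Id on 𝔭ᵢ,
𝔨 an adapted subalgebra (𝔨 = ⊕ᵢ 𝔨∩𝔭ᵢ, and the orthogonal complement 𝔪ᵢ of 𝔨∩𝔭ᵢ in 𝔭ᵢ
is ad(𝔨)-invariant). If every X admits W ∈ 𝔨 with [A(X), X+W] = 0, then for indices
i ≠ j with 𝔪ᵢ ≠ 0 ≠ 𝔪ⱼ and uᵢ ≠ uⱼ one has [𝔪ᵢ, 𝔪ⱼ] ⊆ 𝔪ᵢ ⊕ 𝔪ⱼ. -/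
theorem stmt13 {g : Type*} [LieRing g] [LieAlgebra ℝ g] [FiniteDimensional ℝ g]
    -- ip : bi-invariant inner product on 𝔤 :
    (ip : LinearMap.BilinForm ℝ g)
    (hsymm : ∀ X Y, ip X Y = ip Y X)
    (hpos : ∀ X, X ≠ 0 → 0 < ip X X)
    (hbiinv : ∀ X Y Z : g, ip ⁅X, Y⁆ Z = - ip Y ⁅X, Z⁆)
    {s : ℕ} (p : Fin s → Submodule ℝ g)
    (hptop : ⨆ i, p i = ⊤)
    (hporth : ∀ i j, i ≠ j → ∀ x ∈ p i, ∀ y ∈ p j, ip x y = 0)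
    -- A : the metric endomorphism, acting by uᵢ on 𝔭ᵢ :
    (u : Fin s → ℝ) (hu : ∀ i, 0 < u i)
    (A : g →ₗ[ℝ] g) (hA : ∀ i, ∀ x ∈ p i, A x = u i • x)
    -- 𝔨 : an adapted subalgebra :
    (k : LieSubalgebra ℝ g)
    (hk : k.toSubmodule = ⨆ i, (k.toSubmodule ⊓ p i))
    -- 𝔪ᵢ : the ip-orthogonal complement of 𝔨 ∩ 𝔭ᵢ in 𝔭ᵢ :
    (mm : Fin s → Submodule ℝ g)
    (hmm : ∀ i x, x ∈ mm i ↔ x ∈ p i ∧ ∀ y ∈ k.toSubmodule ⊓ p i, ip x y = 0)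
    (hmminv : ∀ i, ∀ Z ∈ k, ∀ x ∈ mm i, ⁅Z, x⁆ ∈ mm i)
    -- the GO condition :
    (hGO : ∀ X : g, ∃ W ∈ k, ⁅A X, X + W⁆ = 0)
    (i j : Fin s) (hij : i ≠ j) (huij : u i ≠ u j)
    (hmi : mm i ≠ ⊥) (hmj : mm j ≠ ⊥) :
    ∀ x ∈ mm i, ∀ y ∈ mm j, ⁅x, y⁆ ∈ mm i ⊔ mm j := by
  intro x hx y hy
  obtain ⟨W, hW, hWeq⟩ := hGO (x + y)
  have hxp : x ∈ p i := ((hmm i x).mp hx).1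
  have hyp : y ∈ p j := ((hmm j y).mp hy).1
  have hAxy : A (x + y) = u i • x + u j • y := by
    rw [map_add, hA i x hxp, hA j y hyp]
  rw [hAxy] at hWeq
  have key : (u i - u j) • ⁅x, y⁆ = u i • ⁅W, x⁆ + u j • ⁅W, y⁆ := by
    have expand : ⁅u i • x + u j • y, x + y + W⁆
        = (u i - u j) • ⁅x, y⁆ - (u i • ⁅W, x⁆ + u j • ⁅W, y⁆) := by
      simp only [add_lie, lie_add, smul_lie, lie_self, smul_zero, sub_smul]
      rw [← lie_skew y x, ← lie_skew x W, ← lie_skew y W]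
      simp only [smul_neg]
      abel
    rw [expand] at hWeq
    linear_combination (norm := abel) hWeq
  have hdne : u i - u j ≠ 0 := sub_ne_zero.mpr huij
  have hmem : u i • ⁅W, x⁆ + u j • ⁅W, y⁆ ∈ mm i ⊔ mm j := by
    refine Submodule.add_mem _ ?_ ?_
    · exact Submodule.smul_mem _ _ (Submodule.mem_sup_left (hmminv i W hW x hx))
    · exact Submodule.smul_mem _ _ (Submodule.mem_sup_right (hmminv j W hW y hy))
  have : ⁅x, y⁆ = (u i - u j)⁻¹ • ((u i - u j) • ⁅x, y⁆) := by
    rw [smul_smul, inv_mul_cancel₀ hdne, one_smul]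
  rw [this, key]
  exact Submodule.smul_mem _ _ hmem
end

section
/- In a Lie algebra 𝔤 with subspace decomposition 𝔤 = 𝔭₁ ⊕ ... ⊕ 𝔭₅ satisfying [𝔭₃,𝔭₅] ⊆ 𝔭₄, [𝔭₄,𝔭₅] ⊆ 𝔭₃, [𝔭₃,𝔭₄] ⊆ 𝔭₃ ⊕ 𝔭₅ with [𝔭₃,𝔭₅] ≠ 0, [𝔭₄,𝔭₅] ≠ 0, and [𝔭₃,𝔭₄] ⊄ 𝔭₃: there is no subalgebra 𝔨 ⊆ 𝔤 and decomposition 𝔪ᵢ ⊆ 𝔭ᵢ (complements of 𝔨∩𝔭ᵢ in 𝔭ᵢ) with 𝔨 ∩ 𝔭ᵢ = 0 for at least two indices i, j ∈ {3,4,5}, such that for all such pairs i ≠ j one has either [𝔪ᵢ,𝔪ⱼ] ⊆ 𝔪ᵢ or [𝔪ᵢ,𝔪ⱼ] ⊆ 𝔪ⱼ. (This is the contradiction in case 3 of the proof that the 5-parameter metrics on G₂ with pairwise distinct parameters are not geodesic orbit.) -/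
/-!
Each of the three pairs among 𝔭₃, 𝔭₄, 𝔭₅ violates the condition on its own. For (3,5) and (4,5)
the bracket lands in the third summand, which meets both factors trivially, so a bracket inside
either factor would vanish, contradicting [𝔭₃,𝔭₅] ≠ 0 and [𝔭₄,𝔭₅] ≠ 0. For (3,4), a bracket
inside 𝔭₄ would also lie in 𝔭₃ ⊕ 𝔭₅, which meets 𝔭₄ trivially, so it would vanish and in
particular lie in 𝔭₃, contradicting [𝔭₃,𝔭₄] ⊄ 𝔭₃.
-/

namespace Submodule

variable {R L : Type*} [Ring R] [LieRing L] [Module R L]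

def BracketLE (p q r : Submodule R L) : Prop :=
  ∀ x ∈ p, ∀ y ∈ q, ⁅x, y⁆ ∈ r

def BracketAbsorbed (p q : Submodule R L) : Prop :=
  BracketLE p q p ∨ BracketLE p q q

variable {p q r s : Submodule R L}

theorem BracketLE.swap (h : BracketLE p q r) : BracketLE q p r := fun x hx y hy => by
  rw [← lie_skew]
  exact r.neg_mem (h y hy x hx)

theorem BracketAbsorbed.swap (h : BracketAbsorbed p q) : BracketAbsorbed q p :=
  h.symm.imp BracketLE.swap BracketLE.swap

theorem BracketLE.mono (h : BracketLE p q r) (hrs : r ≤ s) : BracketLE p q s :=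
  fun x hx y hy => hrs (h x hx y hy)

theorem BracketLE.inf (hr : BracketLE p q r) (hs : BracketLE p q s) : BracketLE p q (r ⊓ s) :=
  fun x hx y hy => ⟨hr x hx y hy, hs x hx y hy⟩

theorem BracketLE.of_disjoint (hr : BracketLE p q r) (hs : BracketLE p q s) (hrs : Disjoint r s) :
    BracketLE p q ⊥ :=
  hrs.eq_bot ▸ hr.inf hs

theorem not_bracketAbsorbed_of_bracketLE_of_disjoint (h : BracketLE p q r) (hpr : Disjoint p r)
    (hqr : Disjoint q r) (hne : ∃ x ∈ p, ∃ y ∈ q, ⁅x, y⁆ ≠ 0) : ¬ BracketAbsorbed p q := by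
  obtain ⟨x, hx, y, hy, hxy⟩ := hne
  rintro (hp | hq)
  · exact hxy ((hp.of_disjoint h hpr) x hx y hy)
  · exact hxy ((hq.of_disjoint h hqr) x hx y hy)

theorem not_bracketAbsorbed_of_bracketLE_sup (h : BracketLE p q (p ⊔ s)) (hq : Disjoint q (p ⊔ s))
    (hns : ¬ BracketLE p q p) : ¬ BracketAbsorbed p q := by
  rintro (hp | hq')
  · exact hns hp
  · exact hns ((hq'.of_disjoint h hq).mono bot_le)

end Submodule

open Submodule

theorem not_bracketAbsorbed_of_ne {ι R L : Type*} [LinearOrder ι] [Ring R] [LieRing L]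
    [Module R L] {m : ι → Submodule R L} (hm : ∀ i j, i < j → ¬ BracketAbsorbed (m i) (m j))
    {i j : ι} (hij : i ≠ j) : ¬ BracketAbsorbed (m i) (m j) := by
  rcases hij.lt_or_gt with h | h
  · exact hm i j h
  · exact fun habs => hm j i h habs.swap

theorem iSupIndep.disjoint_sup {ι α : Type*} [CompleteLattice α] {t : ι → α}
    (ht : iSupIndep t) {i j k : ι} (hij : i ≠ j) (hik : i ≠ k) : Disjoint (t i) (t j ⊔ t k) := by
  simpa only [iSup_pair] using
    ht.disjoint_biSup (y := {j, k}) (by simp only [Set.mem_insert_iff, Set.mem_singleton_iff]; tauto)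

theorem stmt18_general {g : Type*} [LieRing g] [LieAlgebra ℝ g]
    (p₁ p₂ p₃ p₄ p₅ : Submodule ℝ g)
    (hind : iSupIndep ![p₁, p₂, p₃, p₄, p₅])
    (h35 : ∀ x ∈ p₃, ∀ y ∈ p₅, ⁅x, y⁆ ∈ p₄)
    (h45 : ∀ x ∈ p₄, ∀ y ∈ p₅, ⁅x, y⁆ ∈ p₃)
    (h34 : ∀ x ∈ p₃, ∀ y ∈ p₄, ⁅x, y⁆ ∈ p₃ ⊔ p₅)
    (h35ne : ∃ x ∈ p₃, ∃ y ∈ p₅, ⁅x, y⁆ ≠ 0)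
    (h45ne : ∃ x ∈ p₄, ∃ y ∈ p₅, ⁅x, y⁆ ≠ 0)
    (h34ns : ¬ ∀ x ∈ p₃, ∀ y ∈ p₄, ⁅x, y⁆ ∈ p₃) :
    ¬ ∃ (k : LieSubalgebra ℝ g) (S : Set (Fin 3)),
      (∃ i ∈ S, ∃ j ∈ S, i ≠ j) ∧
      (∀ i ∈ S, k.toSubmodule ⊓ (![p₃, p₄, p₅] i) = ⊥) ∧
      (∀ i ∈ S, ∀ j ∈ S, i ≠ j →
        ((∀ x ∈ ![p₃, p₄, p₅] i, ∀ y ∈ ![p₃, p₄, p₅] j, ⁅x, y⁆ ∈ ![p₃, p₄, p₅] i) ∨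
         (∀ x ∈ ![p₃, p₄, p₅] i, ∀ y ∈ ![p₃, p₄, p₅] j, ⁅x, y⁆ ∈ ![p₃, p₄, p₅] j))) := by
  rintro ⟨-, S, ⟨i, hi, j, hj, hij⟩, -, habs⟩
  have hdisj {a b : Fin 5} (hab : a ≠ b) := hind.pairwiseDisjoint hab
  have h4_35 : Disjoint p₄ (p₃ ⊔ p₅) :=
    hind.disjoint_sup (i := 3) (j := 2) (k := 4) (by decide) (by decide)
  have hpairs : ∀ a b : Fin 3, a < b → ¬ BracketAbsorbed (![p₃, p₄, p₅] a) (![p₃, p₄, p₅] b) := by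
    intro a b hab
    fin_cases a <;> fin_cases b <;> simp only [Fin.lt_def] at hab <;> try omega
    · exact not_bracketAbsorbed_of_bracketLE_sup h34 h4_35 h34ns
    · exact not_bracketAbsorbed_of_bracketLE_of_disjoint h35
        (hdisj (a := 2) (b := 3) (by decide)) (hdisj (a := 4) (b := 3) (by decide)) h35ne
    · exact not_bracketAbsorbed_of_bracketLE_of_disjoint h45
        (hdisj (a := 3) (b := 2) (by decide)) (hdisj (a := 4) (b := 2) (by decide)) h45ne
  exact not_bracketAbsorbed_of_ne hpairs hij (habs i hi j hj hij)

/-- contradiction in case 3 of Proposition 4.4: in a Lie algebra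
𝔤 = 𝔭₁ ⊕ … ⊕ 𝔭₅ with [𝔭₃,𝔭₅] ⊆ 𝔭₄, [𝔭₄,𝔭₅] ⊆ 𝔭₃, [𝔭₃,𝔭₄] ⊆ 𝔭₃ ⊕ 𝔭₅,
[𝔭₃,𝔭₅] ≠ 0, [𝔭₄,𝔭₅] ≠ 0 and [𝔭₃,𝔭₄] ⊄ 𝔭₃, there is no subalgebra 𝔨 and set of
at least two indices among {3,4,5} with 𝔨 ∩ 𝔭ᵢ = 0 (so 𝔪ᵢ = 𝔭ᵢ) such that for all
pairs of such indices [𝔪ᵢ,𝔪ⱼ] ⊆ 𝔪ᵢ or [𝔪ᵢ,𝔪ⱼ] ⊆ 𝔪ⱼ. -/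
theorem stmt18 {g : Type*} [LieRing g] [LieAlgebra ℝ g]
    (p₁ p₂ p₃ p₄ p₅ : Submodule ℝ g)
    (hind : iSupIndep ![p₁, p₂, p₃, p₄, p₅])
    (hsup : p₁ ⊔ p₂ ⊔ p₃ ⊔ p₄ ⊔ p₅ = ⊤)
    (h35 : ∀ x ∈ p₃, ∀ y ∈ p₅, ⁅x, y⁆ ∈ p₄)
    (h45 : ∀ x ∈ p₄, ∀ y ∈ p₅, ⁅x, y⁆ ∈ p₃)
    (h34 : ∀ x ∈ p₃, ∀ y ∈ p₄, ⁅x, y⁆ ∈ p₃ ⊔ p₅)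
    (h35ne : ∃ x ∈ p₃, ∃ y ∈ p₅, ⁅x, y⁆ ≠ 0)
    (h45ne : ∃ x ∈ p₄, ∃ y ∈ p₅, ⁅x, y⁆ ≠ 0)
    (h34ns : ¬ ∀ x ∈ p₃, ∀ y ∈ p₄, ⁅x, y⁆ ∈ p₃) :
    ¬ ∃ (k : LieSubalgebra ℝ g) (S : Set (Fin 3)),
      (∃ i ∈ S, ∃ j ∈ S, i ≠ j) ∧
      (∀ i ∈ S, k.toSubmodule ⊓ (![p₃, p₄, p₅] i) = ⊥) ∧
      (∀ i ∈ S, ∀ j ∈ S, i ≠ j →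
        ((∀ x ∈ ![p₃, p₄, p₅] i, ∀ y ∈ ![p₃, p₄, p₅] j, ⁅x, y⁆ ∈ ![p₃, p₄, p₅] i) ∨
         (∀ x ∈ ![p₃, p₄, p₅] i, ∀ y ∈ ![p₃, p₄, p₅] j, ⁅x, y⁆ ∈ ![p₃, p₄, p₅] j))) :=
  stmt18_general p₁ p₂ p₃ p₄ p₅ hind h35 h45 h34 h35ne h45ne h34ns
end
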